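/- Under the hypotheses of the previous setup (Φ normalized Legendrian with unit normal ν = (n₁,n₂,n₃), n₁(0,0) ≠ 0, n₂(0,0) = n₃(0,0) = 0, the two orthogonality identities, the origin a singular point of Φ meaning ∂Φ₁/∂x(0,0) = ∂Φ₂/∂x(0,0) = 0, and the immersivity of (Φ, ν) at the origin), the function n = -n₂/n₁ satisfies n(0,0) = 0 and ∂n/∂x(0,0) ≠ 0. -/

import Mathlib

theorem partx_aux {F : Type*} [NormedAddCommGroup F] [NormedSpace ℝ F]
    (f : ℝ × ℝ → F) (a b : ℝ) (hf : DifferentiableAt ℝ f (a, b)) :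
    HasDerivAt (fun x => f (x, b)) (fderiv ℝ f (a, b) (1, 0)) a := by
  have h1 : HasDerivAt (fun x : ℝ => ((x, b) : ℝ × ℝ)) ((1 : ℝ), (0 : ℝ)) a :=
    (hasDerivAt_id a).prodMk (hasDerivAt_const a b)
  exact hf.hasFDerivAt.comp_hasDerivAt a h1

theorem party_aux {F : Type*} [NormedAddCommGroup F] [NormedSpace ℝ F]
    (f : ℝ × ℝ → F) (a b : ℝ) (hf : DifferentiableAt ℝ f (a, b)) :
    HasDerivAt (fun y => f (a, y)) (fderiv ℝ f (a, b) (0, 1)) b := by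
  have h1 : HasDerivAt (fun y : ℝ => ((a, y) : ℝ × ℝ)) ((0 : ℝ), (1 : ℝ)) b :=
    (hasDerivAt_const b a).prodMk (hasDerivAt_id b)
  exact hf.hasFDerivAt.comp_hasDerivAt b h1

theorem stmt_9 (Φ₁ Φ₂ n₁ n₂ n₃ : ℝ × ℝ → ℝ)
    (hΦ₁ : ContDiff ℝ (⊤ : ℕ∞) Φ₁) (hΦ₂ : ContDiff ℝ (⊤ : ℕ∞) Φ₂)
    (hn₁ : ContDiff ℝ (⊤ : ℕ∞) n₁) (hn₂ : ContDiff ℝ (⊤ : ℕ∞) n₂) (hn₃ : ContDiff ℝ (⊤ : ℕ∞) n₃)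
    (hunit : ∀ q : ℝ × ℝ, n₁ q ^ 2 + n₂ q ^ 2 + n₃ q ^ 2 = 1)
    (h₁0 : n₁ (0, 0) ≠ 0) (h₂0 : n₂ (0, 0) = 0) (h₃0 : n₃ (0, 0) = 0)
    (horth₁ : ∀ q : ℝ × ℝ,
      n₁ q * deriv (fun x => Φ₁ (x, q.2)) q.1 + n₂ q * deriv (fun x => Φ₂ (x, q.2)) q.1 = 0)
    (horth₂ : ∀ q : ℝ × ℝ,
      n₁ q * deriv (fun y => Φ₁ (q.1, y)) q.2 + n₂ q * deriv (fun y => Φ₂ (q.1, y)) q.2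
        + n₃ q = 0)
    (hsing : deriv (fun x => Φ₁ (x, (0:ℝ))) 0 = 0 ∧ deriv (fun x => Φ₂ (x, (0:ℝ))) 0 = 0)
    (himm : Function.Injective (fderiv ℝ
      (fun q : ℝ × ℝ => ((Φ₁ q, Φ₂ q, q.2), (n₁ q, n₂ q, n₃ q))) (0, 0))) :
    -(n₂ (0, 0) / n₁ (0, 0)) = 0 ∧
    deriv (fun x => -(n₂ (x, (0:ℝ)) / n₁ (x, (0:ℝ)))) 0 ≠ 0 := by
  -- differentiability facts
  have dΦ₁ : Differentiable ℝ Φ₁ := hΦ₁.differentiable (by simp)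
  have dΦ₂ : Differentiable ℝ Φ₂ := hΦ₂.differentiable (by simp)
  have dn₁ : Differentiable ℝ n₁ := hn₁.differentiable (by simp)
  have dn₂ : Differentiable ℝ n₂ := hn₂.differentiable (by simp)
  have dn₃ : Differentiable ℝ n₃ := hn₃.differentiable (by simp)
  set c := n₁ (0, 0) with hc
  set d₁ := fderiv ℝ n₁ (0, 0) (1, 0) with hd₁
  set d₂ := fderiv ℝ n₂ (0, 0) (1, 0) with hd₂def
  set d₃ := fderiv ℝ n₃ (0, 0) (1, 0) with hd₃def
  -- partial derivative functions of Φ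
  set A₁ : ℝ × ℝ → ℝ := fun q => fderiv ℝ Φ₁ q (1, 0) with hA₁
  set A₂ : ℝ × ℝ → ℝ := fun q => fderiv ℝ Φ₂ q (1, 0) with hA₂
  set B₁ : ℝ × ℝ → ℝ := fun q => fderiv ℝ Φ₁ q (0, 1) with hB₁
  set B₂ : ℝ × ℝ → ℝ := fun q => fderiv ℝ Φ₂ q (0, 1) with hB₂
  have hA₁c : ContDiff ℝ 1 A₁ :=
    (hΦ₁.fderiv_right ((by exact WithTop.coe_le_coe.2 le_top))).clm_apply contDiff_const
  have hA₂c : ContDiff ℝ 1 A₂ :=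
    (hΦ₂.fderiv_right ((by exact WithTop.coe_le_coe.2 le_top))).clm_apply contDiff_const
  have hB₁c : ContDiff ℝ 1 B₁ :=
    (hΦ₁.fderiv_right ((by exact WithTop.coe_le_coe.2 le_top))).clm_apply contDiff_const
  have hB₂c : ContDiff ℝ 1 B₂ :=
    (hΦ₂.fderiv_right ((by exact WithTop.coe_le_coe.2 le_top))).clm_apply contDiff_const
  have dA₁ : Differentiable ℝ A₁ := hA₁c.differentiable one_ne_zero
  have dA₂ : Differentiable ℝ A₂ := hA₂c.differentiable one_ne_zero
  have dB₁ : Differentiable ℝ B₁ := hB₁c.differentiable one_ne_zero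
  have dB₂ : Differentiable ℝ B₂ := hB₂c.differentiable one_ne_zero
  -- rewrite horth₁ using A's
  have horth₁' : ∀ q : ℝ × ℝ, n₁ q * A₁ q + n₂ q * A₂ q = 0 := by
    intro q
    have e1 : deriv (fun x => Φ₁ (x, q.2)) q.1 = A₁ q := by
      have := (partx_aux Φ₁ q.1 q.2 (dΦ₁ _)).deriv
      simpa using this
    have e2 : deriv (fun x => Φ₂ (x, q.2)) q.1 = A₂ q := by
      have := (partx_aux Φ₂ q.1 q.2 (dΦ₂ _)).deriv
      simpa using this
    have := horth₁ q
    rwa [e1, e2] at this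
  have horth₂' : ∀ q : ℝ × ℝ, n₁ q * B₁ q + n₂ q * B₂ q + n₃ q = 0 := by
    intro q
    have e1 : deriv (fun y => Φ₁ (q.1, y)) q.2 = B₁ q := by
      have := (party_aux Φ₁ q.1 q.2 (dΦ₁ _)).deriv
      simpa using this
    have e2 : deriv (fun y => Φ₂ (q.1, y)) q.2 = B₂ q := by
      have := (party_aux Φ₂ q.1 q.2 (dΦ₂ _)).deriv
      simpa using this
    have := horth₂ q
    rwa [e1, e2] at this
  -- singular point: A₁ (0,0) = A₂ (0,0) = 0
  have hA₁0 : A₁ (0, 0) = 0 := by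
    have h := (partx_aux Φ₁ 0 0 (dΦ₁ _)).deriv
    show fderiv ℝ Φ₁ (0, 0) (1, 0) = 0
    rw [← h]; exact hsing.1
  have hA₂0 : A₂ (0, 0) = 0 := by
    have h := (partx_aux Φ₂ 0 0 (dΦ₂ _)).deriv
    show fderiv ℝ Φ₂ (0, 0) (1, 0) = 0
    rw [← h]; exact hsing.2
  -- main claim: d₂ ≠ 0
  have hd₂ : d₂ ≠ 0 := by
    intro hd₂0
    -- Step 1: d₁ = 0 from the unit identity
    have hd₁0 : d₁ = 0 := by
      have h1 := (partx_aux n₁ 0 0 (dn₁ _)).pow 2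
      have h2 := (partx_aux n₂ 0 0 (dn₂ _)).pow 2
      have h3 := (partx_aux n₃ 0 0 (dn₃ _)).pow 2
      have hsum := (h1.add h2).add h3
      have hconst : (fun x => n₁ (x, (0:ℝ)) ^ 2 + n₂ (x, (0:ℝ)) ^ 2 + n₃ (x, (0:ℝ)) ^ 2)
          = fun _ : ℝ => (1 : ℝ) := funext fun x => hunit (x, 0)
      change HasDerivAt (fun x => n₁ (x, (0:ℝ)) ^ 2 + n₂ (x, (0:ℝ)) ^ 2 + n₃ (x, (0:ℝ)) ^ 2) _ _ at hsum
      rw [hconst] at hsum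
      have := hsum.unique (hasDerivAt_const 0 1)
      simp only [← hd₁, ← hd₂def, ← hd₃def, ← hc] at this
      simp only [hd₂0, h₂0, h₃0] at this
      norm_num at this
      have hc0 : c ≠ 0 := h₁0
      rcases this with h | h
      · exact absurd h hc0
      · exact h
    -- Step 2: differentiate horth₁ along y at (0,0): get fderiv A₁ (0,0) (0,1) = 0
    have hA₁y : fderiv ℝ A₁ (0, 0) (0, 1) = 0 := by
      have h1 := (party_aux n₁ 0 0 (dn₁ _)).mul (party_aux A₁ 0 0 (dA₁ _))
      have h2 := (party_aux n₂ 0 0 (dn₂ _)).mul (party_aux A₂ 0 0 (dA₂ _))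
      have hsum := h1.add h2
      have hconst : (fun y => n₁ ((0:ℝ), y) * A₁ (0, y) + n₂ ((0:ℝ), y) * A₂ (0, y))
          = fun _ : ℝ => (0 : ℝ) := funext fun y => horth₁' (0, y)
      change HasDerivAt (fun y => n₁ ((0:ℝ), y) * A₁ (0, y) + n₂ ((0:ℝ), y) * A₂ (0, y)) _ _ at hsum
      rw [hconst] at hsum
      have h0 := hsum.unique (hasDerivAt_const 0 0)
      simp only [hA₁0, hA₂0, h₂0, mul_zero, zero_mul, add_zero, zero_add] at h0
      have hc0 : c ≠ 0 := h₁0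
      have hcc : c * fderiv ℝ A₁ (0, 0) (0, 1) = 0 := by linarith
      exact (mul_eq_zero.1 hcc).resolve_left hc0
    -- Step 3: symmetry of second derivatives: fderiv B₁ (0,0) (1,0) = 0
    have hB₁x : fderiv ℝ B₁ (0, 0) (1, 0) = 0 := by
      have hf' : ∀ y : ℝ × ℝ, HasFDerivAt Φ₁ (fderiv ℝ Φ₁ y) y := fun y => (dΦ₁ y).hasFDerivAt
      have hdf : DifferentiableAt ℝ (fderiv ℝ Φ₁) (0, 0) :=
        ((hΦ₁.fderiv_right (m := 1) (by exact WithTop.coe_le_coe.2 le_top)).differentiable one_ne_zero) (0, 0)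
      have hsymm := second_derivative_symmetric hf' hdf.hasFDerivAt ((0:ℝ), (1:ℝ)) ((1:ℝ), (0:ℝ))
      have eA : fderiv ℝ A₁ (0, 0) (0, 1)
          = (fderiv ℝ (fderiv ℝ Φ₁) (0, 0) ((0:ℝ), (1:ℝ))) ((1:ℝ), (0:ℝ)) := by
        rw [hA₁, fderiv_clm_apply hdf (differentiableAt_const _)]
        simp
      have eB : fderiv ℝ B₁ (0, 0) (1, 0)
          = (fderiv ℝ (fderiv ℝ Φ₁) (0, 0) ((1:ℝ), (0:ℝ))) ((0:ℝ), (1:ℝ)) := by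
        rw [hB₁, fderiv_clm_apply hdf (differentiableAt_const _)]
        simp
      rw [eB, ← hsymm, ← eA, hA₁y]
    -- Step 4: differentiate horth₂ along x at (0,0): get d₃ = 0
    have hd₃0 : d₃ = 0 := by
      have h1 := (partx_aux n₁ 0 0 (dn₁ _)).mul (partx_aux B₁ 0 0 (dB₁ _))
      have h2 := (partx_aux n₂ 0 0 (dn₂ _)).mul (partx_aux B₂ 0 0 (dB₂ _))
      have h3 := partx_aux n₃ 0 0 (dn₃ _)
      have hsum := (h1.add h2).add h3
      have hconst : (fun x => n₁ (x, (0:ℝ)) * B₁ (x, 0) + n₂ (x, (0:ℝ)) * B₂ (x, 0)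
          + n₃ (x, (0:ℝ))) = fun _ : ℝ => (0 : ℝ) := funext fun x => horth₂' (x, 0)
      change HasDerivAt (fun x => n₁ (x, (0:ℝ)) * B₁ (x, 0) + n₂ (x, (0:ℝ)) * B₂ (x, 0)
          + n₃ (x, (0:ℝ))) _ _ at hsum
      rw [hconst] at hsum
      have h0 := hsum.unique (hasDerivAt_const 0 0)
      simp only [← hd₁, ← hd₂def, ← hd₃def] at h0
      simp only [hd₁0, hd₂0, h₂0, hB₁x, mul_zero, zero_mul, add_zero, zero_add] at h0
      linarith
    -- Step 5: contradiction with injectivity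
    have hF : HasFDerivAt (fun q : ℝ × ℝ => ((Φ₁ q, Φ₂ q, q.2), (n₁ q, n₂ q, n₃ q)))
        (((fderiv ℝ Φ₁ (0,0)).prod ((fderiv ℝ Φ₂ (0,0)).prod (ContinuousLinearMap.snd ℝ ℝ ℝ))).prod
          ((fderiv ℝ n₁ (0,0)).prod ((fderiv ℝ n₂ (0,0)).prod (fderiv ℝ n₃ (0,0))))) (0, 0) := by
      exact ((dΦ₁ _).hasFDerivAt.prodMk ((dΦ₂ _).hasFDerivAt.prodMk
        ((hasFDerivAt_snd)))).prodMk
        ((dn₁ _).hasFDerivAt.prodMk ((dn₂ _).hasFDerivAt.prodMk (dn₃ _).hasFDerivAt))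
    have hL := hF.fderiv
    have e1 : fderiv ℝ Φ₁ (0, 0) ((1:ℝ), (0:ℝ)) = 0 := hA₁0
    have e2 : fderiv ℝ Φ₂ (0, 0) ((1:ℝ), (0:ℝ)) = 0 := hA₂0
    have hz : fderiv ℝ (fun q : ℝ × ℝ => ((Φ₁ q, Φ₂ q, q.2), (n₁ q, n₂ q, n₃ q))) (0, 0)
        ((1:ℝ), (0:ℝ)) = fderiv ℝ (fun q : ℝ × ℝ => ((Φ₁ q, Φ₂ q, q.2), (n₁ q, n₂ q, n₃ q)))
        (0, 0) 0 := by
      rw [hL, map_zero]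
      simp only [ContinuousLinearMap.prod_apply, ContinuousLinearMap.coe_snd']
      rw [e1, e2, ← hd₁, ← hd₂def, ← hd₃def, hd₁0, hd₂0, hd₃0]
      rfl
    have h10 := himm hz
    have h11 : (1 : ℝ) = 0 := congrArg Prod.fst h10
    exact one_ne_zero h11
  -- conclude
  refine ⟨by rw [h₂0]; simp, ?_⟩
  have hdiv := ((partx_aux n₂ 0 0 (dn₂ _)).div (partx_aux n₁ 0 0 (dn₁ _)) h₁0).neg
  rw [show (fun x => -(n₂ (x, (0:ℝ)) / n₁ (x, (0:ℝ))))
      = -((fun x => n₂ (x, (0:ℝ))) / fun x => n₁ (x, (0:ℝ))) from rfl, hdiv.deriv]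
  have hc0 : c ≠ 0 := h₁0
  simp only [← hd₂def, ← hd₁, ← hc, h₂0, zero_mul, sub_zero]
  intro h
  apply hd₂
  have h' : d₂ * c = 0 := by
    have hsq : c ^ 2 ≠ 0 := pow_ne_zero 2 hc0
    rw [neg_eq_zero, div_eq_zero_iff] at h
    exact h.resolve_right hsq
  exact (mul_eq_zero.1 h').resolve_right hc0
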